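/- arXiv:2211.10932 — 7 statements merged into one kernel-verified Lean document; each statement's English description precedes it below -/
import Mathlib

section
/- For an order-enriched category A, the MacNeille operator cl on P(A), acting as the identity on objects and defined by cl(S) = {f ∈ A(a,b) | for all morphisms g: a' → a, h: b → b', k: a → b of A, if h ∘ s ∘ g ≤ k for all s ∈ S then h ∘ f ∘ g ≤ k}, is a compatible quantaloidal nucleus on the power-set quantaloid P(A). -/
universe u v

/-- A (small) quantaloid: a category enriched in complete lattices, with composition
preserving arbitrary suprema in both variables. -/
structure Quantaloid where
  Obj : Type u
  Hom : Obj → Obj → Type v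
  [lat : ∀ a b, CompleteLattice (Hom a b)]
  id : ∀ a, Hom a a
  comp : ∀ {a b c}, Hom b c → Hom a b → Hom a c
  id_comp : ∀ {a b} (f : Hom a b), comp (id b) f = f
  comp_id : ∀ {a b} (f : Hom a b), comp f (id a) = f
  assoc : ∀ {a b c d} (h : Hom c d) (g : Hom b c) (f : Hom a b),
    comp (comp h g) f = comp h (comp g f)
  comp_sSup : ∀ {a b c} (g : Hom b c) (S : Set (Hom a b)),
    comp g (sSup S) = sSup ((fun f => comp g f) '' S)
  sSup_comp : ∀ {a b c} (S : Set (Hom b c)) (f : Hom a b),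
    comp (sSup S) f = sSup ((fun g => comp g f) '' S)

attribute [instance] Quantaloid.lat

/-- A quantaloidal nucleus on a quantaloid: a family of monotone, inflationary,
idempotent maps on the hom-lattices, lax with respect to composition. -/
structure QNucleus (Q : Quantaloid) where
  map : ∀ {a b : Q.Obj}, Q.Hom a b → Q.Hom a b
  mono : ∀ {a b : Q.Obj} {f g : Q.Hom a b}, f ≤ g → map f ≤ map g
  le_map : ∀ {a b : Q.Obj} (f : Q.Hom a b), f ≤ map f
  idem : ∀ {a b : Q.Obj} (f : Q.Hom a b), map (map f) = map f
  comp_le : ∀ {a b c : Q.Obj} (g : Q.Hom b c) (f : Q.Hom a b),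
    Q.comp (map g) (map f) ≤ map (Q.comp g f)

/-- Hom-sets of the quotient `Q_j`: fixed points of the nucleus, with the induced order. -/
abbrev QNucleus.FHom {Q : Quantaloid} (j : QNucleus Q) (a b : Q.Obj) : Type v :=
  {f : Q.Hom a b // j.map f = f}

/-- Composition in the quotient `Q_j`: `g ∘_j f = j (g ∘ f)`. -/
def QNucleus.qcomp {Q : Quantaloid} (j : QNucleus Q) {a b c : Q.Obj}
    (g : j.FHom b c) (f : j.FHom a b) : j.FHom a c :=
  ⟨j.map (Q.comp g.1 f.1), j.idem _⟩

/-- The identity of the quotient `Q_j` at `a` is `j(1_a)`. -/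
def QNucleus.qid {Q : Quantaloid} (j : QNucleus Q) (a : Q.Obj) : j.FHom a a :=
  ⟨j.map (Q.id a), j.idem _⟩
/-- An order-enriched category: a locally small category whose hom-sets are posets
and whose composition is monotone in both variables. -/
structure OCat where
  Obj : Type u
  Hom : Obj → Obj → Type v
  [po : ∀ a b, PartialOrder (Hom a b)]
  id : ∀ a, Hom a a
  comp : ∀ {a b c}, Hom b c → Hom a b → Hom a c
  id_comp : ∀ {a b} (f : Hom a b), comp (id b) f = f
  comp_id : ∀ {a b} (f : Hom a b), comp f (id a) = f
  assoc : ∀ {a b c d} (h : Hom c d) (g : Hom b c) (f : Hom a b),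
    comp (comp h g) f = comp h (comp g f)
  comp_mono : ∀ {a b c} {g₁ g₂ : Hom b c} {f₁ f₂ : Hom a b},
    g₁ ≤ g₂ → f₁ ≤ f₂ → comp g₁ f₁ ≤ comp g₂ f₂

attribute [instance] OCat.po

/-- The power-set quantaloid `P(A)` of an order-enriched category `A`: same objects,
hom-sets the power sets of the hom-sets of `A` ordered by inclusion, composition
`T ∘ S = {g ∘ f | g ∈ T, f ∈ S}`, identities `{1_a}`. -/
def PQ (A : OCat) : Quantaloid where
  Obj := A.Obj
  Hom a b := Set (A.Hom a b)
  lat _ _ := inferInstance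
  id a := {A.id a}
  comp T S := Set.image2 A.comp T S
  id_comp S := by ext x; simp [A.id_comp]
  comp_id S := by ext x; simp [A.comp_id]
  assoc U T S := by
    ext x
    simp only [Set.mem_image2]
    constructor
    · rintro ⟨y, ⟨u, hu, t, ht, rfl⟩, s, hs, rfl⟩
      exact ⟨u, hu, A.comp t s, ⟨t, ht, s, hs, rfl⟩, (A.assoc u t s).symm⟩
    · rintro ⟨u, hu, y, ⟨t, ht, s, hs, rfl⟩, rfl⟩
      exact ⟨A.comp u t, ⟨u, hu, t, ht, rfl⟩, s, hs, A.assoc u t s⟩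
  comp_sSup T 𝒮 := by
    ext x
    simp only [Set.sSup_eq_sUnion, Set.mem_image2, Set.mem_sUnion, Set.mem_image]
    constructor
    · rintro ⟨g, hg, f, ⟨S, hS, hf⟩, rfl⟩
      exact ⟨_, ⟨S, hS, rfl⟩, g, hg, f, hf, rfl⟩
    · rintro ⟨_, ⟨S, hS, rfl⟩, g, hg, f, hf, rfl⟩
      exact ⟨g, hg, f, ⟨S, hS, hf⟩, rfl⟩
  sSup_comp 𝒯 S := by
    ext x
    simp only [Set.sSup_eq_sUnion, Set.mem_image2, Set.mem_sUnion, Set.mem_image]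
    constructor
    · rintro ⟨g, ⟨T, hT, hg⟩, f, hf, rfl⟩
      exact ⟨_, ⟨T, hT, rfl⟩, g, hg, f, hf, rfl⟩
    · rintro ⟨_, ⟨T, hT, rfl⟩, g, hg, f, hf, rfl⟩
      exact ⟨g, ⟨T, hT, hg⟩, f, hf, rfl⟩

/-- A quantaloidal nucleus on the power-set quantaloid `P(A)` is compatible if
`j({f}) = ↓f` for every morphism `f` of `A`. -/
def QNucleus.Compatible {A : OCat} (j : QNucleus (PQ A)) : Prop :=
  ∀ {a b : A.Obj} (f : A.Hom a b), j.map ({f} : Set (A.Hom a b)) = Set.Iic f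

/-- The MacNeille operator on `P(A)(a,b)`:
`cl(S) = {f | ∀ g : a' → a, h : b → b', k : a' → b', (∀ s ∈ S, h∘s∘g ≤ k) → h∘f∘g ≤ k}`. -/
def clOp (A : OCat) {a b : A.Obj} (S : Set (A.Hom a b)) : Set (A.Hom a b) :=
  {f | ∀ (a' b' : A.Obj) (g : A.Hom a' a) (h : A.Hom b b') (k : A.Hom a' b'),
        (∀ s ∈ S, A.comp h (A.comp s g) ≤ k) → A.comp h (A.comp f g) ≤ k}

/-- `cl` is the closure of the Galois connection between sets of morphisms and sets of
tests `(g, h, k)`, a morphism `f` passing `(g, h, k)` when `h ∘ f ∘ g ≤ k`. -/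
theorem clOp_subset_clOp_of_subset_clOp (A : OCat) {a b : A.Obj} {S T : Set (A.Hom a b)}
    (hTS : T ⊆ clOp A S) : clOp A T ⊆ clOp A S :=
  fun _ hf a' b' g h k hS => hf a' b' g h k fun _ ht => hTS ht a' b' g h k hS

theorem subset_clOp (A : OCat) {a b : A.Obj} (S : Set (A.Hom a b)) : S ⊆ clOp A S :=
  fun f hf _ _ _ _ _ hS => hS f hf

def macNeilleClosure (A : OCat) (a b : A.Obj) : ClosureOperator (Set (A.Hom a b)) :=
  .mk₂ (clOp A) (subset_clOp A) fun _ _ => clOp_subset_clOp_of_subset_clOp A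

theorem image2_comp_clOp_subset_clOp_left (A : OCat) {a b c : A.Obj}
    (T : Set (A.Hom b c)) (S : Set (A.Hom a b)) :
    Set.image2 A.comp (clOp A T) S ⊆ clOp A (Set.image2 A.comp T S) := by
  rintro _ ⟨t, ht, s, hs, rfl⟩ a' c' g h k hTS
  have hT : ∀ u ∈ T, A.comp h (A.comp u (A.comp s g)) ≤ k := fun u hu => by
    simpa only [A.assoc] using hTS _ ⟨u, hu, s, hs, rfl⟩
  simpa only [A.assoc] using ht a' c' (A.comp s g) h k hT

theorem image2_comp_clOp_subset_clOp_right (A : OCat) {a b c : A.Obj}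
    (T : Set (A.Hom b c)) (S : Set (A.Hom a b)) :
    Set.image2 A.comp T (clOp A S) ⊆ clOp A (Set.image2 A.comp T S) := by
  rintro _ ⟨t, ht, s, hs, rfl⟩ a' c' g h k hTS
  have hS : ∀ v ∈ S, A.comp (A.comp h t) (A.comp v g) ≤ k := fun v hv => by
    simpa only [A.assoc] using hTS _ ⟨t, ht, v, hv, rfl⟩
  simpa only [A.assoc] using hs a' c' g (A.comp h t) k hS

/-- `cl T ∘ cl S ⊆ cl (T ∘ cl S) ⊆ cl (T ∘ S)`, the last step because `T ∘ cl S ⊆ cl (T ∘ S)`. -/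
theorem image2_comp_clOp_subset_clOp (A : OCat) {a b c : A.Obj}
    (T : Set (A.Hom b c)) (S : Set (A.Hom a b)) :
    Set.image2 A.comp (clOp A T) (clOp A S) ⊆ clOp A (Set.image2 A.comp T S) :=
  calc Set.image2 A.comp (clOp A T) (clOp A S)
      ⊆ clOp A (Set.image2 A.comp T (clOp A S)) := image2_comp_clOp_subset_clOp_left A _ _
    _ ⊆ clOp A (Set.image2 A.comp T S) :=
      clOp_subset_clOp_of_subset_clOp A (image2_comp_clOp_subset_clOp_right A T S)

theorem clOp_singleton (A : OCat) {a b : A.Obj} (f : A.Hom a b) :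
    clOp A {f} = Set.Iic f := by
  refine subset_antisymm (fun f' hf' => ?_) fun f' (hf' : f' ≤ f) a' b' g h k hf => ?_
  · show f' ≤ f
    -- the test `(1, 1, f)`
    have hf : ∀ s ∈ ({f} : Set (A.Hom a b)), A.comp (A.id b) (A.comp s (A.id a)) ≤ f := by
      rintro s rfl
      rw [A.comp_id, A.id_comp]
    simpa only [A.comp_id, A.id_comp] using hf' a b (A.id a) (A.id b) f hf
  · exact (A.comp_mono le_rfl (A.comp_mono hf' le_rfl)).trans (hf f rfl)

def macNeilleNucleus (A : OCat) : QNucleus (PQ A) where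
  map {a b} := macNeilleClosure A a b
  mono {a b} _ _ hST := (macNeilleClosure A a b).monotone hST
  le_map {a b} := (macNeilleClosure A a b).le_closure
  idem {a b} := (macNeilleClosure A a b).idempotent
  comp_le := image2_comp_clOp_subset_clOp A

/-- For an order-enriched category `A`, the MacNeille operator `cl` (identity on
objects) is a compatible quantaloidal nucleus on the power-set quantaloid `P(A)`. -/
theorem macneille_is_compatible_nucleus (A : OCat) :
    ∃ j : QNucleus (PQ A),
      (∀ {a b : A.Obj} (S : Set (A.Hom a b)), j.map S = clOp A S) ∧ j.Compatible :=
  ⟨macNeilleNucleus A, fun _ => rfl, clOp_singleton A⟩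
end

section
/- If j is a compatible nucleus on the power-set quantaloid P(A) of an order-enriched category A, then the pair (F_j, P(A)_j), where F_j is the identity on objects and sends f to ↓f, is a quantaloidal completion of A; in particular F_j is an order-embedding on hom-sets and every element S of P(A)_j(a,b) equals the supremum in P(A)_j of {↓f | f ∈ S}. -/
universe u v

instance (A : OCat) (a b : A.Obj) : CompleteLattice ((PQ A).Hom a b) := (PQ A).lat a b

/-- The comparison 2-functor `F_j : A → P(A)_j`, identity on objects, `f ↦ ↓f`
(a fixed point of any compatible nucleus `j`). -/
def Fj {A : OCat} (j : QNucleus (PQ A)) (hj : j.Compatible) {a b : A.Obj}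
    (f : A.Hom a b) : j.FHom a b :=
  ⟨Set.Iic f, by rw [← hj f]; exact j.idem _⟩

/-!
Compatibility says that `↓f` is the `j`-closure of `{f}`. Hence a fixed point `S` of `j`
lies above `↓f` exactly when `f ∈ S`; this gives at once that `F_j` reflects the order and
that every fixed point is the join of the `↓f` below it. For functoriality, `↓g ∘ ↓f` lies
between `{g ∘ f}` and `↓(g ∘ f)`, and both bounds have `j`-closure `↓(g ∘ f)`.
-/

theorem QNucleus.map_le_iff_le_of_map_eq {Q : Quantaloid} (j : QNucleus Q) {a b : Q.Obj}
    {S T : Q.Hom a b} (hS : j.map S = S) : j.map T ≤ S ↔ T ≤ S :=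
  ⟨fun h => (j.le_map T).trans h, fun h => hS ▸ j.mono h⟩

section Fj

variable {A : OCat} {j : QNucleus (PQ A)} (hj : j.Compatible)

theorem Fj_le_iff_mem {a b : A.Obj} (f : A.Hom a b) (S : j.FHom a b) :
    Fj j hj f ≤ S ↔ f ∈ (show Set (A.Hom a b) from S.1) := by
  change Set.Iic f ⊆ S.1 ↔ _
  rw [← hj f]
  exact (j.map_le_iff_le_of_map_eq S.2).trans Set.singleton_subset_iff

theorem Fj_le_Fj_iff {a b : A.Obj} (f g : A.Hom a b) : Fj j hj f ≤ Fj j hj g ↔ f ≤ g :=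
  Fj_le_iff_mem hj f (Fj j hj g)

theorem Fj_id (a : A.Obj) : Fj j hj (A.id a) = j.qid a :=
  Subtype.ext (hj (A.id a)).symm

theorem Fj_comp {a b c : A.Obj} (g : A.Hom b c) (f : A.Hom a b) :
    Fj j hj (A.comp g f) = j.qcomp (Fj j hj g) (Fj j hj f) := by
  have hlower : ({A.comp g f} : Set (A.Hom a c)) ⊆ Set.image2 A.comp (Set.Iic g) (Set.Iic f) :=
    Set.singleton_subset_iff.mpr (Set.mem_image2_of_mem le_rfl le_rfl)
  have hupper : Set.image2 A.comp (Set.Iic g) (Set.Iic f) ⊆ Set.Iic (A.comp g f) := by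
    rintro _ ⟨g', hg', f', hf', rfl⟩
    exact A.comp_mono hg' hf'
  apply Subtype.ext
  change Set.Iic (A.comp g f) = j.map (Set.image2 A.comp (Set.Iic g) (Set.Iic f))
  apply le_antisymm
  · exact hj (A.comp g f) ▸ j.mono hlower
  · exact (j.map_le_iff_le_of_map_eq (Fj j hj (A.comp g f)).2).mpr hupper

theorem isLUB_image_Fj {a b : A.Obj} (S : j.FHom a b) :
    IsLUB ((fun f => Fj j hj f) '' (show Set (A.Hom a b) from S.1)) S := by
  refine ⟨?_, fun T hT => ?_⟩
  · rintro _ ⟨f, hf, rfl⟩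
    exact (Fj_le_iff_mem hj f S).mpr hf
  · exact fun f hf => (Fj_le_iff_mem hj f T).mp (hT ⟨f, hf, rfl⟩)

end Fj

/-- If `j` is a compatible nucleus on the power-set quantaloid `P(A)` of an
order-enriched category `A`, then `(F_j, P(A)_j)` is a quantaloidal completion of `A`:
`F_j` is a 2-functor, identity (hence bijective) on objects, an order-embedding on
hom-sets, and every `S ∈ P(A)_j(a,b)` is the supremum in `P(A)_j` of `{↓f | f ∈ S}`. -/
theorem compatible_nucleus_gives_completion (A : OCat) (j : QNucleus (PQ A))
    (hj : j.Compatible) :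
    -- bijective (indeed the identity) on objects
    Function.Bijective (fun a : A.Obj => a) ∧
    -- a 2-functor: monotone on hom-sets, preserves identities and composition
    (∀ {a b : A.Obj} {f g : A.Hom a b}, f ≤ g → Fj j hj f ≤ Fj j hj g) ∧
    (∀ a : A.Obj, Fj j hj (A.id a) = j.qid a) ∧
    (∀ {a b c : A.Obj} (g : A.Hom b c) (f : A.Hom a b),
        Fj j hj (A.comp g f) = j.qcomp (Fj j hj g) (Fj j hj f)) ∧
    -- an order-embedding on hom-sets
    (∀ {a b : A.Obj} (f g : A.Hom a b), Fj j hj f ≤ Fj j hj g ↔ f ≤ g) ∧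
    -- every element of P(A)_j(a,b) is the sup in P(A)_j of the down-sets of its members
    (∀ {a b : A.Obj} (S : j.FHom a b),
        IsLUB ((fun f => Fj j hj f) '' (show Set (A.Hom a b) from S.1)) S) :=
  ⟨Function.bijective_id, fun {_ _ f g} => (Fj_le_Fj_iff hj f g).mpr, Fj_id hj, Fj_comp hj,
    Fj_le_Fj_iff hj, isLUB_image_Fj hj⟩
end

section
/- Let (F, Q) be a quantaloidal completion of an order-enriched category A. Then the map j_{(F,Q)}, acting as the identity on objects and sending S ∈ P(A)(a,b) to {f ∈ A(a,b) | F(f) ≤ ⋁_{g∈S} F(g)}, is a compatible quantaloidal nucleus on the power-set quantaloid P(A). -/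
universe u v

/-- `(F, Q)` is a quantaloidal completion of the order-enriched category `A`:
`F` is a 2-functor which is bijective on objects, an order-embedding on hom-sets,
and every morphism of `Q` is a supremum of `F`-images of morphisms of `A`. -/
structure IsQuantCompletion (A : OCat) (Q : Quantaloid) (Fo : A.Obj → Q.Obj)
    (Fm : ∀ a b : A.Obj, A.Hom a b → Q.Hom (Fo a) (Fo b)) : Prop where
  map_id : ∀ a : A.Obj, Fm a a (A.id a) = Q.id (Fo a)
  map_comp : ∀ {a b c : A.Obj} (g : A.Hom b c) (f : A.Hom a b),
    Fm a c (A.comp g f) = Q.comp (Fm b c g) (Fm a b f)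
  mono : ∀ {a b : A.Obj} {f g : A.Hom a b}, f ≤ g → Fm a b f ≤ Fm a b g
  obj_bijective : Function.Bijective Fo
  embed : ∀ {a b : A.Obj} {f g : A.Hom a b}, Fm a b f ≤ Fm a b g → f ≤ g
  dense : ∀ {a b : A.Obj} (p : Q.Hom (Fo a) (Fo b)),
    ∃ U : Set (A.Hom a b), p = sSup ((Fm a b) '' U)

/-! `j_{(F,Q)}` is the closure operator of the Galois connection between `S ↦ ⋁ F(S)` and
`p ↦ {f | F f ≤ p}`, hence monotone, inflationary and idempotent. It is lax for composition
because `F` is a functor and composition in `Q` distributes over joins, so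
`⋁ F(T ∘ S) = ⋁ F(T) ∘ ⋁ F(S)`. Compatibility is the order-embedding property of `F`. -/

namespace Quantaloid

variable (Q : Quantaloid) {a b c : Q.Obj}

lemma comp_sup (g : Q.Hom b c) (f f' : Q.Hom a b) :
    Q.comp g (f ⊔ f') = Q.comp g f ⊔ Q.comp g f' := by
  rw [← sSup_pair, Q.comp_sSup, Set.image_pair, sSup_pair]

lemma sup_comp (g g' : Q.Hom b c) (f : Q.Hom a b) :
    Q.comp (g ⊔ g') f = Q.comp g f ⊔ Q.comp g' f := by
  rw [← sSup_pair, Q.sSup_comp, Set.image_pair, sSup_pair]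

lemma comp_mono {g g' : Q.Hom b c} {f f' : Q.Hom a b} (hg : g ≤ g') (hf : f ≤ f') :
    Q.comp g f ≤ Q.comp g' f' :=
  calc Q.comp g f ≤ Q.comp g' f := by
        rw [← sup_eq_right.mpr hg, sup_comp]; exact le_sup_left
    _ ≤ Q.comp g' f' := by
        rw [← sup_eq_right.mpr hf, comp_sup]; exact le_sup_left

lemma sSup_comp_sSup (T : Set (Q.Hom b c)) (S : Set (Q.Hom a b)) :
    Q.comp (sSup T) (sSup S) = sSup (Set.image2 Q.comp T S) := by
  simp only [Q.sSup_comp, Q.comp_sSup, sSup_image, sSup_image2]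

end Quantaloid

section CompletionClosure

variable {A : OCat} {Q : Quantaloid} {Fo : A.Obj → Q.Obj}
  (Fm : ∀ a b : A.Obj, A.Hom a b → Q.Hom (Fo a) (Fo b)) {a b c : A.Obj}

/-- The map `j_{(F,Q)}` on the hom-sets of `P(A)`. -/
def completionClosure (S : Set (A.Hom a b)) : Set (A.Hom a b) :=
  {f | Fm a b f ≤ sSup (Fm a b '' S)}

lemma subset_completionClosure (S : Set (A.Hom a b)) : S ⊆ completionClosure Fm S :=
  fun _ hf => le_sSup (Set.mem_image_of_mem _ hf)

lemma completionClosure_mono {S S' : Set (A.Hom a b)} (h : S ⊆ S') :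
    completionClosure Fm S ⊆ completionClosure Fm S' :=
  fun _ hf => hf.trans (sSup_le_sSup (Set.image_mono h))

lemma sSup_image_completionClosure (S : Set (A.Hom a b)) :
    sSup (Fm a b '' completionClosure Fm S) = sSup (Fm a b '' S) :=
  le_antisymm (sSup_le (Set.forall_mem_image.mpr fun _ hf => hf))
    (sSup_le_sSup (Set.image_mono (subset_completionClosure Fm S)))

lemma completionClosure_idem (S : Set (A.Hom a b)) :
    completionClosure Fm (completionClosure Fm S) = completionClosure Fm S := by
  rw [completionClosure, sSup_image_completionClosure]
  rfl

lemma image2_comp_completionClosure_subset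
    (map_comp : ∀ {a b c : A.Obj} (g : A.Hom b c) (f : A.Hom a b),
      Fm a c (A.comp g f) = Q.comp (Fm b c g) (Fm a b f))
    (T : Set (A.Hom b c)) (S : Set (A.Hom a b)) :
    Set.image2 A.comp (completionClosure Fm T) (completionClosure Fm S) ⊆
      completionClosure Fm (Set.image2 A.comp T S) := by
  rintro _ ⟨g, hg, f, hf, rfl⟩
  have hsup : sSup (Fm a c '' Set.image2 A.comp T S) =
      Q.comp (sSup (Fm b c '' T)) (sSup (Fm a b '' S)) := by
    rw [Q.sSup_comp_sSup, Set.image_image2_distrib map_comp]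
  change Fm a c (A.comp g f) ≤ _
  rw [hsup, map_comp]
  exact Q.comp_mono hg hf

lemma completionClosure_singleton
    (mono : ∀ {f g : A.Hom a b}, f ≤ g → Fm a b f ≤ Fm a b g)
    (embed : ∀ {f g : A.Hom a b}, Fm a b f ≤ Fm a b g → f ≤ g) (f : A.Hom a b) :
    completionClosure Fm {f} = Set.Iic f := by
  ext g
  simp only [completionClosure, Set.image_singleton, sSup_singleton, Set.mem_ofPred_eq,
    Set.mem_Iic]
  exact ⟨embed, mono⟩

def completionNucleus
    (map_comp : ∀ {a b c : A.Obj} (g : A.Hom b c) (f : A.Hom a b),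
      Fm a c (A.comp g f) = Q.comp (Fm b c g) (Fm a b f)) : QNucleus (PQ A) where
  map := completionClosure Fm
  mono := completionClosure_mono Fm
  le_map := subset_completionClosure Fm
  idem := completionClosure_idem Fm
  comp_le := image2_comp_completionClosure_subset Fm map_comp

end CompletionClosure

/-- Let `(F, Q)` be a quantaloidal completion of an order-enriched category `A`.  Then
the map `j_{(F,Q)}`, identity on objects and sending `S ∈ P(A)(a,b)` to
`{f ∈ A(a,b) | F(f) ≤ ⋁_{g∈S} F(g)}`, is a compatible quantaloidal nucleus on the
power-set quantaloid `P(A)`. -/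
theorem completion_induces_compatible_nucleus (A : OCat) (Q : Quantaloid)
    (Fo : A.Obj → Q.Obj) (Fm : ∀ a b : A.Obj, A.Hom a b → Q.Hom (Fo a) (Fo b))
    (hF : IsQuantCompletion A Q Fo Fm) :
    ∃ j : QNucleus (PQ A),
      (∀ {a b : A.Obj} (S : Set (A.Hom a b)),
          j.map S = {f : A.Hom a b | Fm a b f ≤ sSup ((Fm a b) '' S)}) ∧
      j.Compatible :=
  ⟨completionNucleus Fm hF.map_comp, fun _ => rfl,
    completionClosure_singleton Fm hF.mono hF.embed⟩
end

section
/- Let (F, Q) be a quantaloidal completion of an order-enriched category A, and let j = j_{(F,Q)} be the nucleus with j(S) = {f | F(f) ≤ ⋁_{g∈S} F(g)}. Then Q is isomorphic as a quantaloid to the quotient P(A)_j, via the functor G defined on objects by G = F⁻¹ and on morphisms by G(p) = {f ∈ A(F⁻¹c, F⁻¹d) | F(f) ≤ p}. -/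
universe u v

instance PQ.instCompleteLattice (A : OCat) (a b : A.Obj) : CompleteLattice ((PQ A).Hom a b) :=
  Quantaloid.lat (PQ A) a b

/-!
Since `F` is join-dense, every `p : Q(Fa, Fb)` is the join of the `F f` below it, so `p ↦ ↓p`
is an order isomorphism onto the sets fixed by `j`, with inverse `S ↦ ⋁ F(S)`. Composition is
respected because `F` is a functor and composition in `Q` preserves joins in each variable:
`⋁ F(T ∘ S) = ⋁ F(T) ∘ ⋁ F(S)`.
-/

section JoinDense

variable {α L : Type*} [CompleteLattice L] {F : α → L}

theorem sSup_image_setOf_le (dense : ∀ p : L, ∃ U : Set α, p = sSup (F '' U)) (p : L) :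
    sSup (F '' {x | F x ≤ p}) = p := by
  refine le_antisymm (sSup_le (by rintro _ ⟨x, hx, rfl⟩; exact hx)) ?_
  obtain ⟨U, rfl⟩ := dense p
  exact sSup_le_sSup (Set.image_mono fun x hx => le_sSup (Set.mem_image_of_mem F hx))

def joinDenseOrderIso (F : α → L) (dense : ∀ p : L, ∃ U : Set α, p = sSup (F '' U))
    (c : Set α → Set α) (hc : ∀ S, c S = {x | F x ≤ sSup (F '' S)}) :
    L ≃o {S : Set α // c S = S} where
  toFun p := ⟨{x | F x ≤ p}, by rw [hc, sSup_image_setOf_le dense]⟩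
  invFun S := sSup (F '' S.1)
  left_inv := sSup_image_setOf_le dense
  right_inv S := Subtype.ext ((hc S.1).symm.trans S.2)
  map_rel_iff' {p q} := by
    refine ⟨fun h => ?_, fun h x hx => le_trans hx h⟩
    rw [← sSup_image_setOf_le dense p, ← sSup_image_setOf_le dense q]
    exact sSup_le_sSup (Set.image_mono h)

end JoinDense

namespace Quantaloid

variable (Q : Quantaloid) {a b c : Q.Obj} {ι : Type*}

theorem comp_biSup (g : Q.Hom b c) (s : Set ι) (f : ι → Q.Hom a b) :
    Q.comp g (⨆ i ∈ s, f i) = ⨆ i ∈ s, Q.comp g (f i) := by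
  rw [← sSup_image, Q.comp_sSup, Set.image_image, sSup_image]

theorem biSup_comp (s : Set ι) (g : ι → Q.Hom b c) (f : Q.Hom a b) :
    Q.comp (⨆ i ∈ s, g i) f = ⨆ i ∈ s, Q.comp (g i) f := by
  rw [← sSup_image, Q.sSup_comp, Set.image_image, sSup_image]

end Quantaloid

theorem IsQuantCompletion.sSup_image_image2_comp {A : OCat} {Q : Quantaloid}
    {Fo : A.Obj → Q.Obj} {Fm : ∀ a b : A.Obj, A.Hom a b → Q.Hom (Fo a) (Fo b)}
    (hF : IsQuantCompletion A Q Fo Fm) {a b c : A.Obj}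
    (T : Set (A.Hom b c)) (S : Set (A.Hom a b)) :
    sSup (Fm a c '' Set.image2 A.comp T S) =
      Q.comp (sSup (Fm b c '' T)) (sSup (Fm a b '' S)) := by
  simp only [Set.image_image2, sSup_image2, sSup_image, Q.biSup_comp, Q.comp_biSup, hF.map_comp]

/-- Let `(F, Q)` be a quantaloidal completion of an order-enriched category `A`, and
`j = j_{(F,Q)}` the nucleus `j(S) = {f | F(f) ≤ ⋁_{g∈S} F(g)}`.  Then `Q` is
quantaloidally isomorphic to the quotient `P(A)_j`, via `G` with
`G(p) = {f | F(f) ≤ p}` on hom-sets (and `G = F⁻¹` on objects). -/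
theorem completion_isomorphic_to_quotient (A : OCat) (Q : Quantaloid)
    (Fo : A.Obj → Q.Obj) (Fm : ∀ a b : A.Obj, A.Hom a b → Q.Hom (Fo a) (Fo b))
    (hF : IsQuantCompletion A Q Fo Fm) (j : QNucleus (PQ A))
    (hj : ∀ {a b : A.Obj} (S : Set (A.Hom a b)),
        j.map S = {f : A.Hom a b | Fm a b f ≤ sSup ((Fm a b) '' S)}) :
    ∃ e : ∀ a b : A.Obj, Q.Hom (Fo a) (Fo b) ≃o j.FHom a b,
      -- `e` is given by `p ↦ {f | F(f) ≤ p}`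
      (∀ (a b : A.Obj) (p : Q.Hom (Fo a) (Fo b)),
          (show Set (A.Hom a b) from (e a b p).1) = {f : A.Hom a b | Fm a b f ≤ p}) ∧
      -- `e` preserves composition and identities
      (∀ {a b c : A.Obj} (g : Q.Hom (Fo b) (Fo c)) (f : Q.Hom (Fo a) (Fo b)),
          e a c (Q.comp g f) = j.qcomp (e b c g) (e a b f)) ∧
      (∀ a : A.Obj, e a a (Q.id (Fo a)) = j.qid a) := by
  refine ⟨fun a b => joinDenseOrderIso (Fm a b) hF.dense j.map hj, fun _ _ _ => rfl, ?_, ?_⟩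
  · intro a b c g f
    apply Subtype.ext
    change {h | Fm a c h ≤ Q.comp g f} =
      j.map (Set.image2 A.comp {t | Fm b c t ≤ g} {s | Fm a b s ≤ f})
    rw [hj, hF.sSup_image_image2_comp, sSup_image_setOf_le hF.dense,
      sSup_image_setOf_le hF.dense]
  · intro a
    apply Subtype.ext
    change {f | Fm a a f ≤ Q.id (Fo a)} = j.map ({A.id a} : Set (A.Hom a a))
    rw [hj, Set.image_singleton, sSup_singleton, hF.map_id]
end

section
/- In the category of order-enriched categories and lax semifunctors, every retract of a quantaloid is a quantaloid. More precisely, if there are lax semifunctors I: S → Q and F: Q → S with F ∘ I = id_S and Q is a quantaloid, then each hom-poset S(X,Y) is a complete lattice with ⋁A = F(⋁ I(A)), and composition in S preserves arbitrary suprema in both variables. -/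
universe u v
/-- A lax semifunctor between order-enriched categories: an object map together with
monotone hom-maps satisfying `F(g) ∘ F(f) ≤ F(g ∘ f)` (no condition on identities). -/
structure LaxSemifunctor (C D : OCat) where
  obj : C.Obj → D.Obj
  map : ∀ {a b : C.Obj}, C.Hom a b → D.Hom (obj a) (obj b)
  mono : ∀ {a b : C.Obj} {f g : C.Hom a b}, f ≤ g → map f ≤ map g
  comp_le : ∀ {a b c : C.Obj} (g : C.Hom b c) (f : C.Hom a b),
    D.comp (map g) (map f) ≤ map (C.comp g f)

/-- Composition of lax semifunctors. -/
def LaxSemifunctor.comp {C D E : OCat} (G : LaxSemifunctor D E) (F : LaxSemifunctor C D) :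
    LaxSemifunctor C E where
  obj := fun a => G.obj (F.obj a)
  map := fun f => G.map (F.map f)
  mono := fun h => G.mono (F.mono h)
  comp_le := fun g f => le_trans (G.comp_le (F.map g) (F.map f)) (G.mono (F.comp_le g f))

/-- The identity lax semifunctor. -/
def LaxSemifunctor.id (C : OCat) : LaxSemifunctor C C where
  obj := fun a => a
  map := fun f => f
  mono := fun h => h
  comp_le := fun _ _ => le_refl _

/-- An order-enriched category is a quantaloid when each hom-poset is a complete
lattice (every subset has a least upper bound) and composition preserves arbitrary
suprema in both variables. -/
def OCat.IsQuantaloid (C : OCat) : Prop :=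
  (∀ (a b : C.Obj) (S : Set (C.Hom a b)), ∃ u, IsLUB S u) ∧
  (∀ {a b c : C.Obj} (g : C.Hom b c) (S : Set (C.Hom a b)) (u : C.Hom a b),
      IsLUB S u → IsLUB ((fun f => C.comp g f) '' S) (C.comp g u)) ∧
  (∀ {a b c : C.Obj} (S : Set (C.Hom b c)) (f : C.Hom a b) (u : C.Hom b c),
      IsLUB S u → IsLUB ((fun g => C.comp g f) '' S) (C.comp u f))

/-- A nonempty composable chain of morphisms (used for finite composites
`f₁ ∘ f₂ ∘ ⋯ ∘ fₙ`). -/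
inductive OPath (C : OCat.{u, v}) : C.Obj → C.Obj → Type (max u v) where
  | single : ∀ {a b : C.Obj}, C.Hom a b → OPath C a b
  | cons : ∀ {a b c : C.Obj}, C.Hom b c → OPath C a b → OPath C a c

/-- The composite `f₁ ∘ f₂ ∘ ⋯ ∘ fₙ` of a composable chain. -/
def OPath.comp {C : OCat} : ∀ {a b : C.Obj}, OPath C a b → C.Hom a b
  | _, _, .single f => f
  | _, _, .cons g p => C.comp g p.comp

/-- Applying a lax semifunctor to each morphism of a composable chain. -/
def OPath.map {C D : OCat} (H : LaxSemifunctor C D) :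
    ∀ {a b : C.Obj}, OPath C a b → OPath D (H.obj a) (H.obj b)
  | _, _, .single f => .single (H.map f)
  | _, _, .cons g p => .cons (H.map g) (p.map H)

/-- The class `E` of lax semifunctors: bijective on objects, and reflecting the order on
finite composites: `H(f₁) ∘ ⋯ ∘ H(fₙ) ≤ H(f)` implies `f₁ ∘ ⋯ ∘ fₙ ≤ f`. -/
def InE {S T : OCat} (H : LaxSemifunctor S T) : Prop :=
  Function.Bijective H.obj ∧
  ∀ {a b : S.Obj} (p : OPath S a b) (f : S.Hom a b),
    (p.map H).comp ≤ H.map f → p.comp ≤ f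

/-!
On hom-posets between objects in the image of `I`, the hom-map of `F` (read in `S` through
`F ∘ I = id` on objects) is a monotone retraction of the monotone map `I`, so `F (⋁ I(A))` is a
supremum of `A`. For composition, laxness of `F` gives
`g ∘ ⋁A = F(I g) ∘ F(⋁ I(A)) ≤ F(I g ∘ ⋁ I(A)) = F(⋁ₐ I g ∘ I a)`, and laxness of `I` bounds
each `I g ∘ I a ≤ I(g ∘ a)` by `I v` for any upper bound `v` of `g ∘ A`; hence `g ∘ ⋁A ≤ F(I v) = v`.
-/

theorem IsLUB.of_image_of_leftInverse {α β : Type*} [Preorder α] [Preorder β] {i : α → β}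
    {r : β → α} (hi : Monotone i) (hr : Monotone r) (hri : Function.LeftInverse r i)
    {A : Set α} {w : β} (hw : IsLUB (i '' A) w) : IsLUB A (r w) := by
  refine ⟨fun a ha => ?_, fun v hv => ?_⟩
  · simpa only [hri a] using hr (hw.1 (Set.mem_image_of_mem i ha))
  · have hwv : w ≤ i v := hw.2 (Set.forall_mem_image.2 fun a ha => hi (hv ha))
    simpa only [hri v] using hr hwv

theorem OCat.cast_le_cast {C : OCat} {a a' b b' : C.Obj} (ha : a = a') (hb : b = b')
    {f g : C.Hom a b} (h : f ≤ g) :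
    cast (by rw [ha, hb]) f ≤ (cast (by rw [ha, hb]) g : C.Hom a' b') := by
  subst ha hb; exact h

theorem OCat.cast_comp {C : OCat} {a a' b b' c c' : C.Obj}
    (ha : a = a') (hb : b = b') (hc : c = c') (g : C.Hom b c) (f : C.Hom a b) :
    (cast (by rw [ha, hc]) (C.comp g f) : C.Hom a' c') =
      C.comp (cast (by rw [hb, hc]) g : C.Hom b' c') (cast (by rw [ha, hb]) f : C.Hom a' b') := by
  subst ha hb hc; rfl

namespace LaxSemifunctor

variable {S Q : OCat} (I : LaxSemifunctor S Q) (F : LaxSemifunctor Q S)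
  (hobj : ∀ X : S.Obj, F.obj (I.obj X) = X)

def retractHom {X Y : S.Obj} (f : Q.Hom (I.obj X) (I.obj Y)) : S.Hom X Y :=
  cast (by rw [hobj X, hobj Y]) (F.map f)

theorem retractHom_mono {X Y : S.Obj} : Monotone (retractHom I F hobj (X := X) (Y := Y)) :=
  fun _ _ h => OCat.cast_le_cast (hobj X) (hobj Y) (F.mono h)

theorem comp_retractHom_le {X Y Z : S.Obj} (g : Q.Hom (I.obj Y) (I.obj Z))
    (f : Q.Hom (I.obj X) (I.obj Y)) :
    S.comp (retractHom I F hobj g) (retractHom I F hobj f) ≤ retractHom I F hobj (Q.comp g f) := by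
  rw [retractHom, retractHom, ← OCat.cast_comp (hobj X) (hobj Y) (hobj Z)]
  exact OCat.cast_le_cast (hobj X) (hobj Z) (F.comp_le g f)

theorem retractHom_map
    (hmap : ∀ {a b : S.Obj} (f : S.Hom a b), HEq (F.map (I.map f)) f) {X Y : S.Obj} (f : S.Hom X Y) : retractHom I F hobj (I.map f) = f :=
  cast_eq_iff_heq.mpr (hmap f)

theorem isLUB_retractHom
    (hmap : ∀ {a b : S.Obj} (f : S.Hom a b), HEq (F.map (I.map f)) f) {X Y : S.Obj} {A : Set (S.Hom X Y)} {w : Q.Hom (I.obj X) (I.obj Y)}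
    (hw : IsLUB (I.map '' A) w) : IsLUB A (retractHom I F hobj w) :=
  hw.of_image_of_leftInverse (fun _ _ => I.mono) (retractHom_mono I F hobj)
    (I.retractHom_map F hobj hmap)

theorem isLUB_image_of_lax
    (hmap : ∀ {a b : S.Obj} (f : S.Hom a b), HEq (F.map (I.map f)) f) {X Y X' Y' : S.Obj} (φ : S.Hom X Y → S.Hom X' Y')
    (ψ : Q.Hom (I.obj X) (I.obj Y) → Q.Hom (I.obj X') (I.obj Y')) (hφ : Monotone φ)
    (hψ : ∀ B w, IsLUB B w → IsLUB (ψ '' B) (ψ w))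
    (hψφ : ∀ f, ψ (I.map f) ≤ I.map (φ f))
    (hφψ : ∀ w, φ (retractHom I F hobj w) ≤ retractHom I F hobj (ψ w))
    {A : Set (S.Hom X Y)} {u : S.Hom X Y} (hu : IsLUB A u) {w : Q.Hom (I.obj X) (I.obj Y)}
    (hw : IsLUB (I.map '' A) w) : IsLUB (φ '' A) (φ u) := by
  refine ⟨hφ.mem_upperBounds_image hu.1, fun v hv => ?_⟩
  have hψw : ψ w ≤ I.map v := by
    refine (hψ _ w hw).2 ?_
    rintro _ ⟨_, ⟨f, hf, rfl⟩, rfl⟩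
    exact (hψφ f).trans (I.mono (hv (Set.mem_image_of_mem φ hf)))
  calc φ u = φ (retractHom I F hobj w) := by rw [hu.unique (I.isLUB_retractHom F hobj hmap hw)]
    _ ≤ retractHom I F hobj (ψ w) := hφψ w
    _ ≤ retractHom I F hobj (I.map v) := retractHom_mono I F hobj hψw
    _ = v := I.retractHom_map F hobj hmap v

end LaxSemifunctor

/-- In the category of order-enriched categories and lax semifunctors, every retract of
a quantaloid is a quantaloid.  More precisely, if `I : S → Q` and `F : Q → S` are lax
semifunctors with `F ∘ I = id_S` and `Q` is a quantaloid, then `S` is a quantaloid: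
each hom-poset `S(X,Y)` is a complete lattice, with `⋁A = F(⋁ I(A))`, and composition
in `S` preserves arbitrary suprema in both variables. -/
theorem retract_of_quantaloid_is_quantaloid (S Q : OCat) (hQ : Q.IsQuantaloid)
    (I : LaxSemifunctor S Q) (F : LaxSemifunctor Q S)
    (hobj : ∀ X : S.Obj, F.obj (I.obj X) = X)
    (hmap : ∀ {a b : S.Obj} (f : S.Hom a b), HEq (F.map (I.map f)) f) :
    S.IsQuantaloid ∧
    ∀ (X Y : S.Obj) (A : Set (S.Hom X Y)) (u : Q.Hom (I.obj X) (I.obj Y)),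
      IsLUB ((fun f => I.map f) '' A) u →
      IsLUB A (cast (by rw [hobj X, hobj Y]) (F.map u)) := by
  obtain ⟨hsup, hcompLeft, hcompRight⟩ := hQ
  refine ⟨⟨fun X Y A => ?_, fun g A u hu => ?_, fun A f u hu => ?_⟩,
    fun X Y A u hu => I.isLUB_retractHom F hobj hmap hu⟩
  · obtain ⟨w, hw⟩ := hsup _ _ (I.map '' A)
    exact ⟨_, I.isLUB_retractHom F hobj hmap hw⟩
  · obtain ⟨w, hw⟩ := hsup _ _ (I.map '' A)
    refine I.isLUB_image_of_lax F hobj hmap (S.comp g) (Q.comp (I.map g))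
      (fun _ _ => S.comp_mono le_rfl) (hcompLeft _) (I.comp_le g) (fun w => ?_) hu hw
    simpa only [I.retractHom_map F hobj hmap] using I.comp_retractHom_le F hobj (I.map g) w
  · obtain ⟨w, hw⟩ := hsup _ _ (I.map '' A)
    refine I.isLUB_image_of_lax F hobj hmap (S.comp · f) (Q.comp · (I.map f))
      (fun _ _ h => S.comp_mono h le_rfl) (fun B w => hcompRight B _ w) (I.comp_le · f)
      (fun w => ?_) hu hw
    simpa only [I.retractHom_map F hobj hmap] using I.comp_retractHom_le F hobj w (I.map f)
end

section
/- Every quantaloid Q is E-injective in the category of order-enriched categories and lax semifunctors, where E is the class of lax semifunctors H: S → T that are bijective on objects and satisfy: H(f_1)∘⋯∘H(f_n) ≤ H(f) implies f_1∘⋯∘f_n ≤ f for composable f_1,…,f_n with f_1∘⋯∘f_n, f ∈ S(a,b). That is, for every H ∈ E and every lax semifunctor F: S → Q there exists a lax semifunctor G: T → Q with G ∘ H = F. -/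
universe u v
/-!
For `g : T(Ha, Hb)` let `G(g)` be the supremum in `Q` of the `F`-images `F(f₁) ∘ ⋯ ∘ F(fₙ)` of
the chains whose `H`-image `H(f₁) ∘ ⋯ ∘ H(fₙ)` lies below `g`. Since suprema in a quantaloid
commute with composition, laxness of `G` reduces to concatenation of chains. For `g = H(f)` the
reflection property of `H` forces every such chain to satisfy `f₁ ∘ ⋯ ∘ fₙ ≤ f`, so `F(f)` is
the greatest approximant and `G(H(f)) = F(f)`. Bijectivity of `H` on objects only serves to
transport this construction from the hom-sets `T(Ha, Hb)` to all of `T`.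
-/

namespace OPath

variable {C D : OCat}

def append : ∀ {a b c : C.Obj}, OPath C b c → OPath C a b → OPath C a c
  | _, _, _, .single g, q => .cons g q
  | _, _, _, .cons g p, q => .cons g (p.append q)

theorem comp_append {a b c : C.Obj} (p : OPath C b c) (q : OPath C a b) :
    (p.append q).comp = C.comp p.comp q.comp := by
  induction p with
  | single g => simp only [append, OPath.comp]
  | cons g p ih =>
    simp only [append, OPath.comp, ih]
    exact (C.assoc g p.comp q.comp).symm

theorem map_append (H : LaxSemifunctor C D) {a b c : C.Obj} (p : OPath C b c)
    (q : OPath C a b) : (p.append q).map H = (p.map H).append (q.map H) := by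
  induction p with
  | single g => simp only [append, map]
  | cons g p ih => simp only [append, map, ih]

theorem comp_map_le (F : LaxSemifunctor C D) {a b : C.Obj} (p : OPath C a b) :
    (p.map F).comp ≤ F.map p.comp := by
  induction p with
  | single f =>
    simp only [map, OPath.comp]
    exact le_refl (F.map f)
  | cons g p ih =>
    simp only [map, OPath.comp]
    exact (D.comp_mono le_rfl ih).trans (F.comp_le g p.comp)

end OPath

namespace OCat

variable {C : OCat}

def homCast {a b a' b' : C.Obj} (ha : a = a') (hb : b = b') (f : C.Hom a b) : C.Hom a' b' :=
  hb ▸ ha ▸ f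

theorem homCast_le_homCast {a b a' b' : C.Obj} (ha : a = a') (hb : b = b') {f g : C.Hom a b}
    (h : f ≤ g) : homCast ha hb f ≤ homCast ha hb g := by
  subst ha hb; exact h

theorem homCast_comp {a b c a' b' c' : C.Obj} (ha : a = a') (hb : b = b') (hc : c = c')
    (g : C.Hom b c) (f : C.Hom a b) :
    homCast ha hc (C.comp g f) = C.comp (homCast hb hc g) (homCast ha hb f) := by
  subst ha hb hc; rfl

namespace IsQuantaloid

noncomputable def lub (hC : C.IsQuantaloid) {a b : C.Obj} (s : Set (C.Hom a b)) : C.Hom a b :=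
  (hC.1 a b s).choose

theorem isLUB_lub (hC : C.IsQuantaloid) {a b : C.Obj} (s : Set (C.Hom a b)) :
    IsLUB s (hC.lub s) :=
  (hC.1 a b s).choose_spec

theorem isLUB_image2_comp (hC : C.IsQuantaloid) {a b c : C.Obj} {s : Set (C.Hom b c)}
    {t : Set (C.Hom a b)} {g : C.Hom b c} {f : C.Hom a b} (hs : IsLUB s g) (ht : IsLUB t f) :
    IsLUB (Set.image2 C.comp s t) (C.comp g f) := by
  refine ⟨?_, fun u hu => (hC.2.2 s f g hs).2 ?_⟩
  · rintro _ ⟨g', hg', f', hf', rfl⟩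
    exact C.comp_mono (hs.1 hg') (ht.1 hf')
  · rintro _ ⟨g', hg', rfl⟩
    exact (hC.2.1 g' t f ht).2 (Set.image_subset_iff.2 fun f' hf' => hu ⟨g', hg', f', hf', rfl⟩)

end IsQuantaloid

end OCat

namespace LaxSemifunctor

variable {S T Q : OCat}

theorem ext_of_heq {F G : LaxSemifunctor S T} (hobj : F.obj = G.obj)
    (hmap : ∀ {a b : S.Obj} (f : S.Hom a b), HEq (F.map f) (G.map f)) : F = G := by
  obtain ⟨obj, map, _, _⟩ := F
  obtain ⟨_, map', _, _⟩ := G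
  subst hobj
  obtain rfl : @map = @map' := by
    funext a b f
    exact eq_of_heq (hmap f)
  rfl

theorem exists_comp_eq_of_bijective (H : LaxSemifunctor S T) (hH : Function.Bijective H.obj)
    (F : LaxSemifunctor S Q)
    (ext : ∀ {a b : S.Obj}, T.Hom (H.obj a) (H.obj b) → Q.Hom (F.obj a) (F.obj b))
    (ext_mono : ∀ {a b : S.Obj} {g g' : T.Hom (H.obj a) (H.obj b)}, g ≤ g' → ext g ≤ ext g')
    (comp_ext_le : ∀ {a b c : S.Obj} (g : T.Hom (H.obj b) (H.obj c))
      (f : T.Hom (H.obj a) (H.obj b)), Q.comp (ext g) (ext f) ≤ ext (T.comp g f))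
    (ext_map : ∀ {a b : S.Obj} (f : S.Hom a b), ext (H.map f) = F.map f) :
    ∃ G : LaxSemifunctor T Q, G.comp H = F := by
  let e := Equiv.ofBijective H.obj hH
  have he (x : T.Obj) : x = H.obj (e.symm x) := (e.apply_symm_apply x).symm
  refine ⟨{ obj := fun x => F.obj (e.symm x)
            map := fun {x y} g => ext (OCat.homCast (he x) (he y) g)
            mono := fun h => ext_mono (OCat.homCast_le_homCast _ _ h)
            comp_le := fun g f => by
              rw [OCat.homCast_comp _ (he _)]
              exact comp_ext_le _ _ }, ?_⟩
  have ext_homCast : ∀ {a a' b b' : S.Obj} (ha : a = a') (hb : b = b')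
      (ha' : H.obj a' = H.obj a) (hb' : H.obj b' = H.obj b) (g : T.Hom (H.obj a') (H.obj b')),
      HEq (ext (OCat.homCast ha' hb' g)) (ext g) := by
    rintro a _ b _ rfl rfl _ _ g
    rfl
  refine ext_of_heq (funext fun a => congrArg F.obj (e.symm_apply_apply a)) fun f => ?_
  rw [← ext_map f]
  exact ext_homCast (e.symm_apply_apply _) (e.symm_apply_apply _) _ _ _

end LaxSemifunctor

section Extension

variable {S T Q : OCat} (H : LaxSemifunctor S T) (F : LaxSemifunctor S Q)

def approximants {a b : S.Obj} (g : T.Hom (H.obj a) (H.obj b)) :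
    Set (Q.Hom (F.obj a) (F.obj b)) :=
  (fun p : OPath S a b => (p.map F).comp) '' {p | (p.map H).comp ≤ g}

theorem approximants_mono {a b : S.Obj} {g g' : T.Hom (H.obj a) (H.obj b)} (h : g ≤ g') :
    approximants H F g ⊆ approximants H F g' :=
  Set.image_mono fun _ hp => le_trans hp h

theorem image2_comp_approximants_subset {a b c : S.Obj} (g : T.Hom (H.obj b) (H.obj c))
    (f : T.Hom (H.obj a) (H.obj b)) :
    Set.image2 Q.comp (approximants H F g) (approximants H F f) ⊆
      approximants H F (T.comp g f) := by
  rintro _ ⟨_, ⟨p, hp, rfl⟩, _, ⟨q, hq, rfl⟩, rfl⟩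
  refine ⟨p.append q, ?_, ?_⟩
  · show ((p.append q).map H).comp ≤ T.comp g f
    rw [OPath.map_append, OPath.comp_append]
    exact T.comp_mono hp hq
  · show ((p.append q).map F).comp = Q.comp (p.map F).comp (q.map F).comp
    rw [OPath.map_append, OPath.comp_append]

theorem isGreatest_approximants_map
    (hrefl : ∀ {a b : S.Obj} (p : OPath S a b) (f : S.Hom a b),
      (p.map H).comp ≤ H.map f → p.comp ≤ f)
    {a b : S.Obj} (f : S.Hom a b) : IsGreatest (approximants H F (H.map f)) (F.map f) := by
  refine ⟨⟨.single f, ?_, by simp only [OPath.map, OPath.comp]⟩, ?_⟩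
  · show ((OPath.single f).map H).comp ≤ H.map f
    simp only [OPath.map, OPath.comp]
    exact le_refl (H.map f)
  rintro _ ⟨p, hp, rfl⟩
  exact (p.comp_map_le F).trans (F.mono (hrefl p f hp))

namespace OCat.IsQuantaloid

variable (hQ : Q.IsQuantaloid)

noncomputable def extend {a b : S.Obj} (g : T.Hom (H.obj a) (H.obj b)) :
    Q.Hom (F.obj a) (F.obj b) :=
  hQ.lub (approximants H F g)

theorem extend_mono {a b : S.Obj} {g g' : T.Hom (H.obj a) (H.obj b)} (h : g ≤ g') :
    hQ.extend H F g ≤ hQ.extend H F g' :=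
  (hQ.isLUB_lub _).mono (hQ.isLUB_lub _) (approximants_mono H F h)

theorem comp_extend_le {a b c : S.Obj} (g : T.Hom (H.obj b) (H.obj c))
    (f : T.Hom (H.obj a) (H.obj b)) :
    Q.comp (hQ.extend H F g) (hQ.extend H F f) ≤ hQ.extend H F (T.comp g f) :=
  (hQ.isLUB_image2_comp (hQ.isLUB_lub _) (hQ.isLUB_lub _)).mono (hQ.isLUB_lub _)
    (image2_comp_approximants_subset H F g f)

theorem extend_map
    (hrefl : ∀ {a b : S.Obj} (p : OPath S a b) (f : S.Hom a b),
      (p.map H).comp ≤ H.map f → p.comp ≤ f)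
    {a b : S.Obj} (f : S.Hom a b) : hQ.extend H F (H.map f) = F.map f :=
  (hQ.isLUB_lub _).unique (isGreatest_approximants_map H F hrefl f).isLUB

end OCat.IsQuantaloid

end Extension

/-- Every quantaloid `Q` is `E`-injective in the category of order-enriched categories
and lax semifunctors, where `E` is the class of lax semifunctors that are bijective on
objects and reflect the order on finite composites: for every `H : S → T` in `E` and
every lax semifunctor `F : S → Q` there is a lax semifunctor `G : T → Q` with
`G ∘ H = F`. -/
theorem quantaloid_is_E_injective (Q : OCat) (hQ : Q.IsQuantaloid) (S T : OCat)
    (H : LaxSemifunctor S T) (hH : InE H) (F : LaxSemifunctor S Q) :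
    ∃ G : LaxSemifunctor T Q, G.comp H = F :=
  H.exists_comp_eq_of_bijective hH.1 F (hQ.extend H F) (hQ.extend_mono H F)
    (hQ.comp_extend_le H F) (hQ.extend_map H F hH.2)
end

section
/- For an order-enriched category A, the embedding η: A → D(A) into the down-set quantaloid, identity on objects and sending f to ↓f, is a lax semifunctor belonging to the class E: it is bijective on objects and satisfies that ↓f_1 ∘ ⋯ ∘ ↓f_n ⊆ ↓f implies f_1 ∘ ⋯ ∘ f_n ≤ f. -/
universe u v
/-- The composite `↓f₁ ∘ ↓f₂ ∘ ⋯ ∘ ↓fₙ` in the down-set quantaloid `D(A)` of a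
composable chain of morphisms of `A` (composition in `D(A)` being
`T ∘ S = ↓{g∘f | g ∈ T, f ∈ S}`). -/
def dcompOPath (A : OCat) : ∀ {a b : A.Obj}, OPath A a b → LowerSet (A.Hom a b)
  | _, _, .single f => LowerSet.Iic f
  | _, _, .cons g p =>
      lowerClosure (Set.image2 A.comp (Set.Iic g) ((dcompOPath A p : LowerSet _) : Set _))

lemma lowerClosure_image2_Iic_Iic {α β γ : Type*} [Preorder α] [Preorder β] [Preorder γ]
    {φ : α → β → γ} (hφ : ∀ {a₁ a₂ b₁ b₂}, a₁ ≤ a₂ → b₁ ≤ b₂ → φ a₁ b₁ ≤ φ a₂ b₂) (a : α) (b : β) :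
    lowerClosure (Set.image2 φ (Set.Iic a) (Set.Iic b)) = LowerSet.Iic (φ a b) := by
  refine le_antisymm (lowerClosure_le.2 ?_) (LowerSet.Iic_le.2 ?_)
  · rintro _ ⟨a', ha', b', hb', rfl⟩
    exact hφ ha' hb'
  · exact subset_lowerClosure (Set.mem_image2_of_mem le_rfl le_rfl)

lemma dcompOPath_eq_Iic_comp (A : OCat) {a b : A.Obj} (p : OPath A a b) :
    dcompOPath A p = LowerSet.Iic p.comp := by
  induction p with
  | single f => rw [dcompOPath, OPath.comp]
  | cons g p ih =>
    rw [dcompOPath, OPath.comp, ih, LowerSet.coe_Iic]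
    exact lowerClosure_image2_Iic_Iic A.comp_mono g p.comp

/-- For an order-enriched category `A`, the embedding `η : A → D(A)` into the down-set
quantaloid — identity on objects, `f ↦ ↓f` — is a lax semifunctor belonging to the
class `E`: it is monotone and lax on hom-sets, bijective (indeed the identity) on
objects, and `↓f₁ ∘ ⋯ ∘ ↓fₙ ⊆ ↓f` implies `f₁ ∘ ⋯ ∘ fₙ ≤ f`. -/
theorem eta_is_lax_semifunctor_in_E (A : OCat) :
    -- η is monotone on hom-sets
    (∀ {a b : A.Obj} {f g : A.Hom a b}, f ≤ g →
        (LowerSet.Iic f : LowerSet (A.Hom a b)) ≤ LowerSet.Iic g) ∧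
    -- η is a lax semifunctor: η(g) ∘ η(f) ≤ η(g ∘ f) in D(A)
    (∀ {a b c : A.Obj} (g : A.Hom b c) (f : A.Hom a b),
        lowerClosure (Set.image2 A.comp (Set.Iic g) (Set.Iic f))
          ≤ LowerSet.Iic (A.comp g f)) ∧
    -- η is bijective (the identity) on objects
    Function.Bijective (fun a : A.Obj => a) ∧
    -- η reflects the order on finite composites
    (∀ {a b : A.Obj} (p : OPath A a b) (f : A.Hom a b),
        dcompOPath A p ≤ LowerSet.Iic f → p.comp ≤ f) := by
  refine ⟨fun hfg => Set.Iic_subset_Iic.2 hfg, fun g f => ?_, Function.bijective_id, ?_⟩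
  · exact (lowerClosure_image2_Iic_Iic A.comp_mono g f).le
  · intro a b p f hp
    rw [dcompOPath_eq_Iic_comp] at hp
    exact Set.Iic_subset_Iic.1 hp
end
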